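/- Let a > 0, b > 0, A, B ∈ ℝ, T ∈ ℝ, and define L(h, r) = A / (1 + a·exp(−b·((180/π)·arctan(h/r) − a))) + 10·log₁₀(h² + r²) + B. Let R : ℝ → ℝ be differentiable at a point h > 0 with R(h) > 0, and suppose L(h', R(h')) = T for all h' in a neighborhood of h. Define X(h) = (−9·ln(10)·A·a·b/π) · R(h)·exp(−b·((180/π)·arctan(h/R(h)) − a)) / (1 + a·exp(−b·((180/π)·arctan(h/R(h)) − a)))² − h. If R(h)² + h² + h·X(h) ≠ 0, then the derivative of h' ↦ R(h')² at h equals 2·X(h)·R(h)² / (R(h)² + h² + h·X(h)). -/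

import Mathlib

/-!
Differentiating the identity `L(h', R h') = T` at `h` (chain rule, then uniqueness of the
derivative of a locally constant function) gives one linear equation in `R'(h)`:
`K (R - h R') + (h + R R') = 0`, where `K` collects the constants of the line-of-sight term
and `X = -K R - h`. Solving it gives `R' (R² + h² + h X) = X R`, and `(R²)' = 2 R R'`.
-/

open Real Filter Topology

lemma hasDerivAt_arctan_div {R : ℝ → ℝ} {d h : ℝ} (hR : HasDerivAt R d h) (hRh : R h ≠ 0) :
    HasDerivAt (fun x => arctan (x / R x)) ((R h - h * d) / (h ^ 2 + R h ^ 2)) h := by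
  convert ((hasDerivAt_id' h).fun_div hR hRh).arctan using 1
  field_simp
  ring

lemma HasDerivAt.const_div_one_add_mul_exp {θ : ℝ → ℝ} {θ' x : ℝ} (A a b c : ℝ) (ha : 0 ≤ a)
    (hθ : HasDerivAt θ θ' x) :
    HasDerivAt (fun y => A / (1 + a * Real.exp (-b * (c * θ y - a))))
      (A * a * b * c * Real.exp (-b * (c * θ x - a)) * θ'
        / (1 + a * Real.exp (-b * (c * θ x - a))) ^ 2) x := by
  have hD : 0 < 1 + a * Real.exp (-b * (c * θ x - a)) := by positivity
  refine ((hasDerivAt_const x A).fun_div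
    ((((hθ.const_mul c).sub_const a).const_mul (-b)).exp.const_mul a |>.const_add 1)
    hD.ne').congr_deriv ?_
  ring

lemma hasDerivAt_logb_sq_add_sq {R : ℝ → ℝ} {d h : ℝ} (c : ℝ) (hR : HasDerivAt R d h)
    (hs : h ^ 2 + R h ^ 2 ≠ 0) :
    HasDerivAt (fun x => logb c (x ^ 2 + R x ^ 2))
      (2 * (h + R h * d) / ((h ^ 2 + R h ^ 2) * log c)) h := by
  have hsum := ((hasDerivAt_id' h).fun_pow 2).fun_add (hR.fun_pow 2)
  refine ((hsum.log hs).div_const (log c)).congr_deriv ?_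
  field_simp
  ring

/-- The factor `exp (-b (θ - a))` of the line-of-sight probability, `θ` the elevation angle
in degrees. -/
noncomputable def losExp (a b h r : ℝ) : ℝ :=
  exp (-b * ((180 / π) * arctan (h / r) - a))

noncomputable def pathLoss (a b A B h r : ℝ) : ℝ :=
  A / (1 + a * losExp a b h r) + 10 * logb 10 (h ^ 2 + r ^ 2) + B

section Implicit

variable {a b A B : ℝ} {R : ℝ → ℝ} {d h : ℝ}

lemma hasDerivAt_pathLoss_comp (ha : 0 ≤ a) (hR : HasDerivAt R d h) (hRh : R h ≠ 0) :
    HasDerivAt (fun x => pathLoss a b A B x (R x))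
      (A * a * b * (180 / π) * losExp a b h (R h) * ((R h - h * d) / (h ^ 2 + R h ^ 2))
          / (1 + a * losExp a b h (R h)) ^ 2
        + 10 * (2 * (h + R h * d) / ((h ^ 2 + R h ^ 2) * log 10))) h :=
  ((((hasDerivAt_arctan_div hR hRh).const_div_one_add_mul_exp A a b (180 / π) ha).add
    ((hasDerivAt_logb_sq_add_sq 10 hR (by positivity)).const_mul 10)).add_const B)

lemma pathLoss_implicit_slope {T : ℝ} (ha : 0 ≤ a) (hR : HasDerivAt R d h) (hRh : R h ≠ 0)
    (hT : ∀ᶠ x in 𝓝 h, pathLoss a b A B x (R x) = T) :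
    9 * log 10 * A * a * b / π * losExp a b h (R h) / (1 + a * losExp a b h (R h)) ^ 2
        * (R h - h * d) + (h + R h * d) = 0 := by
  have hzero := (hasDerivAt_pathLoss_comp ha hR hRh).unique
    ((hasDerivAt_const h T).congr_of_eventuallyEq hT)
  field_simp at hzero ⊢
  linear_combination hzero / 20

end Implicit

theorem stmt_9_general (a b A B T : ℝ) (ha : 0 < a)
    (R : ℝ → ℝ) (h : ℝ) (hRpos : 0 < R h)
    (hdiff : DifferentiableAt ℝ R h)
    (himp : ∀ᶠ h' in nhds h,
      A / (1 + a * Real.exp (-b * ((180 / Real.pi) * Real.arctan (h' / R h') - a)))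
        + 10 * Real.logb 10 (h' ^ 2 + R h' ^ 2) + B = T)
    (X : ℝ)
    (hX : X = (-9 * Real.log 10 * A * a * b / Real.pi)
        * (R h * Real.exp (-b * ((180 / Real.pi) * Real.arctan (h / R h) - a)))
        / (1 + a * Real.exp (-b * ((180 / Real.pi) * Real.arctan (h / R h) - a))) ^ 2
        - h)
    (hden : R h ^ 2 + h ^ 2 + h * X ≠ 0) :
    deriv (fun h' => R h' ^ 2) h = 2 * X * R h ^ 2 / (R h ^ 2 + h ^ 2 + h * X) := by
  have hd := hdiff.hasDerivAt
  have hslope := pathLoss_implicit_slope ha.le hd hRpos.ne' himp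
  have hsolve : deriv R h * (R h ^ 2 + h ^ 2 + h * X) = X * R h := by
    rw [hX]
    unfold losExp at hslope
    linear_combination R h * hslope
  rw [(hd.fun_pow 2).deriv, eq_div_iff hden]
  linear_combination 2 * R h * hsolve

/-- Implicit differentiation of the squared coverage radius (equations (16)-(17)). -/
theorem stmt_9 (a b A B T : ℝ) (ha : 0 < a) (hb : 0 < b)
    (R : ℝ → ℝ) (h : ℝ) (hh : 0 < h) (hRpos : 0 < R h)
    (hdiff : DifferentiableAt ℝ R h)
    (himp : ∀ᶠ h' in nhds h,
      A / (1 + a * Real.exp (-b * ((180 / Real.pi) * Real.arctan (h' / R h') - a)))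
        + 10 * Real.logb 10 (h' ^ 2 + R h' ^ 2) + B = T)
    (X : ℝ)
    (hX : X = (-9 * Real.log 10 * A * a * b / Real.pi)
        * (R h * Real.exp (-b * ((180 / Real.pi) * Real.arctan (h / R h) - a)))
        / (1 + a * Real.exp (-b * ((180 / Real.pi) * Real.arctan (h / R h) - a))) ^ 2
        - h)
    (hden : R h ^ 2 + h ^ 2 + h * X ≠ 0) :
    deriv (fun h' => R h' ^ 2) h = 2 * X * R h ^ 2 / (R h ^ 2 + h ^ 2 + h * X) :=
  stmt_9_general a b A B T ha R h hRpos hdiff himp X hX hden
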